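/- arXiv:1407.3975 — 3 statements merged into one kernel-verified Lean document; each statement's English description precedes it below -/
import Mathlib

section
/- For all p ∈ (0,1) and α ∈ (0, 1/2), the lower bound of the noisy write channel model is strictly smaller than that of the noiseless model: h₂((1 - p + 2αp)/2) - h₂(α)/2 - h₂(p + α - 2αp)/2 < h₂((1-p)/2) - h₂(p)/2. -/
open MeasureTheory

noncomputable def binEnt (t : ℝ) : ℝ :=
  -(t * Real.logb 2 t) - (1 - t) * Real.logb 2 (1 - t)

def bern (q : ℝ) (b : Bool) : ℝ := if b then q else 1 - q

/-- Symmetric Markov transition kernel on Bool with flip probability β. -/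
def mtrans (β : ℝ) (a b : Bool) : ℝ := if b = a then 1 - β else β

/-!
Put `s = 1 - 2α` and `φ(s) = h((1 - ps)/2) - h((1 - s)/2)/2 - h((1 - (2p - 1)s)/2)/2` (natural
logarithms). Since `h(1 - t) = h(t)`, the two sides are `φ(1 - 2α)` and `φ(1)` divided by `log 2`,
so it suffices that `φ` is strictly increasing on `[0, 1]`. From
`d/ds h((1 - cs)/2) = -c artanh(cs)` one gets `s φ'(s) = (χ(s) + χ((2p - 1)s))/2 - χ(ps)` with
`χ(x) = x artanh x`, and this is positive by strict convexity of `χ` on `(-1, 1)`, because `ps` is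
the midpoint of `s` and `(2p - 1)s`.
-/

open Real Set

lemma artanh_eq_half_log_sub {x : ℝ} (hx : x ∈ Ioo (-1) 1) :
    artanh x = (log (1 + x) - log (1 - x)) / 2 := by
  obtain ⟨h₁, h₂⟩ := hx
  rw [artanh_eq_half_log ⟨h₁.le, h₂.le⟩, log_div (by linarith) (by linarith)]
  ring

/-- `x artanh x = ((1+x) log(1+x) + (1-x) log(1-x) - log(1-x²)) / 2`: a strictly convex plus a
convex function. -/
theorem strictConvexOn_mul_artanh : StrictConvexOn ℝ (Ioo (-1) 1) (fun x ↦ x * artanh x) := by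
  refine ⟨convex_Ioo _ _, fun x hx y hy hxy a b ha hb hab ↦ ?_⟩
  have hz : a • x + b • y ∈ Ioo (-1 : ℝ) 1 := convex_Ioo _ _ hx hy ha.le hb.le hab
  simp only [smul_eq_mul] at hz ⊢
  rw [artanh_eq_half_log_sub hx, artanh_eq_half_log_sub hy, artanh_eq_half_log_sub hz]
  obtain ⟨hx₁, hx₂⟩ := hx
  obtain ⟨hy₁, hy₂⟩ := hy
  have hplus : a * (1 + x) + b * (1 + y) = 1 + (a * x + b * y) := by linear_combination hab
  have hminus : a * (1 - x) + b * (1 - y) = 1 - (a * x + b * y) := by linear_combination hab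
  have hmulLog₁ := strictConvexOn_mul_log.2 (x := 1 + x) (y := 1 + y) (mem_Ici.2 (by linarith))
    (mem_Ici.2 (by linarith)) (by contrapose! hxy; linarith) ha hb hab
  have hmulLog₂ := convexOn_mul_log.2 (x := 1 - x) (y := 1 - y) (mem_Ici.2 (by linarith))
    (mem_Ici.2 (by linarith)) ha.le hb.le hab
  have hlog₁ := strictConcaveOn_log_Ioi.concaveOn.2 (x := 1 + x) (y := 1 + y)
    (mem_Ioi.2 (by linarith)) (mem_Ioi.2 (by linarith)) ha.le hb.le hab
  have hlog₂ := strictConcaveOn_log_Ioi.concaveOn.2 (x := 1 - x) (y := 1 - y)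
    (mem_Ioi.2 (by linarith)) (mem_Ioi.2 (by linarith)) ha.le hb.le hab
  simp only [smul_eq_mul, hplus, hminus] at hmulLog₁ hmulLog₂ hlog₁ hlog₂
  linear_combination (hmulLog₁ + hmulLog₂ + hlog₁ + hlog₂) / 2

lemma hasDerivAt_binEntropy_one_sub_mul_div_two {c s : ℝ} (hcs : c * s ∈ Ioo (-1) 1) :
    HasDerivAt (fun t ↦ binEntropy ((1 - c * t) / 2)) (-c * artanh (c * s)) s := by
  obtain ⟨h₁, h₂⟩ := hcs
  have hlin : HasDerivAt (fun t ↦ (1 - c * t) / 2) (-c / 2) s := by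
    simpa using (((hasDerivAt_id s).const_mul c).const_sub 1).div_const 2
  refine ((hasDerivAt_binEntropy (by linarith) (by linarith)).comp s hlin).congr_deriv ?_
  rw [artanh_eq_half_log_sub ⟨h₁, h₂⟩, show 1 - (1 - c * s) / 2 = (1 + c * s) / 2 by ring,
    log_div (by linarith) two_ne_zero, log_div (by linarith) two_ne_zero]
  ring

noncomputable def noisyLowerBound (p s : ℝ) : ℝ :=
  binEntropy ((1 - p * s) / 2) - binEntropy ((1 - s) / 2) / 2
    - binEntropy ((1 - (2 * p - 1) * s) / 2) / 2

lemma hasDerivAt_noisyLowerBound {p s : ℝ} (hp : p ∈ Ioo 0 1) (hs : s ∈ Ioo 0 1) :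
    HasDerivAt (noisyLowerBound p)
      (-p * artanh (p * s) + artanh s / 2 + (2 * p - 1) * artanh ((2 * p - 1) * s) / 2) s := by
  obtain ⟨hp₀, hp₁⟩ := hp
  obtain ⟨hs₀, hs₁⟩ := hs
  have h₁ := hasDerivAt_binEntropy_one_sub_mul_div_two (c := p) (s := s)
    ⟨by nlinarith, by nlinarith⟩
  have h₂ := hasDerivAt_binEntropy_one_sub_mul_div_two (c := 1) (s := s) ⟨by linarith, by linarith⟩
  have h₃ := hasDerivAt_binEntropy_one_sub_mul_div_two (c := 2 * p - 1) (s := s)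
    ⟨by nlinarith, by nlinarith⟩
  simp only [one_mul] at h₂
  exact ((h₁.sub (h₂.div_const 2)).sub (h₃.div_const 2)).congr_deriv (by ring)

lemma strictMonoOn_noisyLowerBound {p : ℝ} (hp : p ∈ Ioo 0 1) :
    StrictMonoOn (noisyLowerBound p) (Icc 0 1) := by
  refine strictMonoOn_of_deriv_pos (convex_Icc 0 1)
    (by unfold noisyLowerBound; fun_prop) fun s hs ↦ ?_
  rw [interior_Icc] at hs
  rw [(hasDerivAt_noisyLowerBound hp hs).deriv]
  obtain ⟨hp₀, hp₁⟩ := hp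
  obtain ⟨hs₀, hs₁⟩ := hs
  have hmid := strictConvexOn_mul_artanh.2 (show s ∈ Ioo (-1) 1 from ⟨by linarith, hs₁⟩)
    (show (2 * p - 1) * s ∈ Ioo (-1) 1 from ⟨by nlinarith, by nlinarith⟩) (by nlinarith)
    (show (0 : ℝ) < 1 / 2 by norm_num) (show (0 : ℝ) < 1 / 2 by norm_num) (by norm_num)
  simp only [smul_eq_mul, show 1 / 2 * s + 1 / 2 * ((2 * p - 1) * s) = p * s by ring] at hmid
  refine pos_of_mul_pos_right (a := s) ?_ hs₀.le
  linear_combination hmid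

lemma binEnt_eq_binEntropy_div_log_two (t : ℝ) : binEnt t = binEntropy t / log 2 := by
  rw [binEnt, binEntropy, logb, logb, log_inv, log_inv]
  ring

/-- For p ∈ (0,1) and α ∈ (0,1/2), the noisy-model lower bound is
strictly smaller than the noiseless one. -/
theorem stmt_9 (p α : ℝ) (hp : p ∈ Set.Ioo (0:ℝ) 1) (hα : α ∈ Set.Ioo (0:ℝ) (1/2)) :
    binEnt ((1 - p + 2 * α * p) / 2) - binEnt α / 2 - binEnt (p + α - 2 * α * p) / 2
      < binEnt ((1 - p) / 2) - binEnt p / 2 := by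
  obtain ⟨hα₀, hα₁⟩ := hα
  have hlt : noisyLowerBound p (1 - 2 * α) < noisyLowerBound p 1 :=
    strictMonoOn_noisyLowerBound hp ⟨by linarith, by linarith⟩ ⟨zero_le_one, le_rfl⟩
      (by linarith)
  have hnoisy : noisyLowerBound p (1 - 2 * α) = binEntropy ((1 - p + 2 * α * p) / 2)
      - binEntropy α / 2 - binEntropy (p + α - 2 * α * p) / 2 := by
    rw [noisyLowerBound, show (1 - p * (1 - 2 * α)) / 2 = (1 - p + 2 * α * p) / 2 by ring,
      show (1 - (1 - 2 * α)) / 2 = α by ring,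
      show (1 - (2 * p - 1) * (1 - 2 * α)) / 2 = 1 - (p + α - 2 * α * p) by ring,
      binEntropy_one_sub]
  have hnoiseless : noisyLowerBound p 1 = binEntropy ((1 - p) / 2) - binEntropy p / 2 := by
    rw [noisyLowerBound, show (1 - (2 * p - 1) * 1) / 2 = 1 - p by ring, binEntropy_one_sub]
    norm_num
  simp only [binEnt_eq_binEntropy_div_log_two]
  calc _ = noisyLowerBound p (1 - 2 * α) / log 2 := by rw [hnoisy]; ring
    _ < noisyLowerBound p 1 / log 2 := div_lt_div_of_pos_right hlt (log_pos one_lt_two)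
    _ = _ := by rw [hnoiseless]; ring
end

section
/- For the write channel with i.u.d. inputs, P(Y_i = 1 | Y_{i-1} = 1) = [ (1 + p(1-p))(1 + 2α(α - 1)) + (1 - p(1-p))(2α(1-α)) ] / 2, obtained by summing the probabilities of the fourteen joint configurations of (W_i, Z_i, X_i, X_{i-1}, W_{i-1}, Z_{i-1}, X_{i-2}) compatible with Y_i = Y_{i-1} = 1. -/
/-!
Both events {Y_{i-1} = 1} and {Y_i = Y_{i-1} = 1} are determined by the tuple
(X_{i-2}, X_{i-1}, X_i, Z_{i-1}, Z_i, W_{i-1}, W_i), so their probabilities are sums of the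
product weights over the 128 configurations: 1/2 for the first event and a quarter of the
stated numerator for the second.
-/

open MeasureTheory

/- Subadditivity bounds the measures of `T ⁻¹' s` and of its complement by the corresponding
sums, and the two sums add up to `μ.real univ`; so no measurability of `T` is needed. -/
theorem measureReal_preimage_finset_eq_sum {Ω ι : Type*} [MeasurableSpace Ω] [Fintype ι]
    {μ : Measure Ω} {T : Ω → ι}
    (h : ∑ v, μ.real (T ⁻¹' {v}) = μ.real Set.univ) (s : Finset ι) :
    μ.real (T ⁻¹' s) = ∑ v ∈ s, μ.real (T ⁻¹' {v}) := by
  classical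
  have hle : ∀ t : Finset ι, μ.real (T ⁻¹' t) ≤ ∑ v ∈ t, μ.real (T ⁻¹' {v}) := fun t => by
    simpa [← Set.preimage_iUnion₂] using measureReal_biUnion_finset_le (μ := μ) t (T ⁻¹' {·})
  have hcover : μ.real Set.univ ≤ μ.real (T ⁻¹' s) + μ.real (T ⁻¹' ↑sᶜ) := by
    simpa [← Set.preimage_union] using measureReal_union_le (μ := μ) (T ⁻¹' s) (T ⁻¹' ↑sᶜ)
  have hsplit := Finset.sum_add_sum_compl s fun v => μ.real (T ⁻¹' {v})
  linarith [hle s, hle sᶜ]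

/- A configuration `(x₀, x₁, x₂, z₀, z₁, w₀, w₁)` stands for
`(X_{i-2}, X_{i-1}, X_i, Z_{i-1}, Z_i, W_{i-1}, W_i)`. -/
abbrev WriteConfig := Bool × Bool × Bool × Bool × Bool × Bool × Bool

noncomputable def writeWeight (p α : ℝ) : WriteConfig → ℝ
  | (_, _, _, z₀, z₁, w₀, w₁) =>
    (1/2) * (1/2) * (1/2) * bern p z₀ * bern p z₁ * bern α w₀ * bern α w₁

def writeOutput (z xStay xShift w : Bool) : Bool := Bool.xor (if z then xShift else xStay) w

def writeY0 : WriteConfig → Bool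
  | (x₀, x₁, _, z₀, _, w₀, _) => writeOutput z₀ x₀ x₁ w₀

def writeY1 : WriteConfig → Bool
  | (_, x₁, x₂, _, z₁, _, w₁) => writeOutput z₁ x₁ x₂ w₁

lemma sum_writeWeight (p α : ℝ) : ∑ v, writeWeight p α v = 1 := by
  simp only [Fintype.sum_prod_type, Fintype.sum_bool, writeWeight, bern, ↓reduceIte,
    Bool.false_eq_true]
  ring

lemma sum_writeWeight_filter_y0 (p α : ℝ) :
    ∑ v with writeY0 v, writeWeight p α v = 1 / 2 := by
  rw [Finset.sum_filter]
  simp only [Fintype.sum_prod_type, Fintype.sum_bool, writeY0, writeOutput, writeWeight, bern,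
    ↓reduceIte, Bool.false_eq_true, Bool.xor_true, Bool.xor_false, Bool.not_true, Bool.not_false]
  ring

lemma sum_writeWeight_filter_y1_y0 (p α : ℝ) :
    ∑ v with writeY1 v ∧ writeY0 v, writeWeight p α v
      = ((1 + p * (1 - p)) * (1 + 2 * α * (α - 1)) + (1 - p * (1 - p)) * (2 * α * (1 - α))) / 4 := by
  rw [Finset.sum_filter]
  simp only [Fintype.sum_prod_type, Fintype.sum_bool, writeY0, writeY1, writeOutput, writeWeight,
    bern, ↓reduceIte, Bool.false_eq_true, Bool.xor_true, Bool.xor_false, Bool.not_true,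
    Bool.not_false, and_true, and_false]
  ring

theorem stmt_11_general {Ω : Type*} [MeasurableSpace Ω] (μ : Measure Ω) [IsProbabilityMeasure μ]
    (X0 X1 X2 Z0 Z1 W0 W1 Y0 Y1 : Ω → Bool) (p α : ℝ)
    (hjoint : ∀ a b c c0 c1 d0 d1 : Bool,
      (μ {ω | X0 ω = a ∧ X1 ω = b ∧ X2 ω = c ∧ Z0 ω = c0 ∧ Z1 ω = c1
              ∧ W0 ω = d0 ∧ W1 ω = d1}).toReal
        = (1/2) * (1/2) * (1/2) * bern p c0 * bern p c1 * bern α d0 * bern α d1)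
    (hY0 : ∀ ω, Y0 ω = Bool.xor (if Z0 ω then X1 ω else X0 ω) (W0 ω))
    (hY1 : ∀ ω, Y1 ω = Bool.xor (if Z1 ω then X2 ω else X1 ω) (W1 ω)) :
    (μ {ω | Y1 ω = true ∧ Y0 ω = true}).toReal / (μ {ω | Y0 ω = true}).toReal
      = ((1 + p * (1 - p)) * (1 + 2 * α * (α - 1))
          + (1 - p * (1 - p)) * (2 * α * (1 - α))) / 2 := by
  set T : Ω → WriteConfig := fun ω => (X0 ω, X1 ω, X2 ω, Z0 ω, Z1 ω, W0 ω, W1 ω)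
  have hfibre : ∀ v, μ.real (T ⁻¹' {v}) = writeWeight p α v := by
    rintro ⟨a, b, c, c0, c1, d0, d1⟩
    rw [writeWeight, ← hjoint a b c]
    congr 2
    ext ω
    simp [T, Prod.ext_iff]
  have hadd : ∑ v, μ.real (T ⁻¹' {v}) = μ.real Set.univ := by
    simp only [hfibre, sum_writeWeight, probReal_univ]
  have hY1Y0 : {ω | Y1 ω = true ∧ Y0 ω = true}
      = T ⁻¹' ↑(Finset.univ.filter fun v => writeY1 v ∧ writeY0 v) := by
    ext ω
    simp [T, writeY0, writeY1, writeOutput, hY0, hY1]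
  have hY0' : {ω | Y0 ω = true} = T ⁻¹' ↑(Finset.univ.filter fun v => writeY0 v) := by
    ext ω
    simp [T, writeY0, writeOutput, hY0]
  rw [← measureReal_def, ← measureReal_def, hY1Y0, hY0',
    measureReal_preimage_finset_eq_sum hadd, measureReal_preimage_finset_eq_sum hadd]
  simp only [hfibre, sum_writeWeight_filter_y1_y0, sum_writeWeight_filter_y0]
  ring

/-- For the write channel with i.u.d. inputs,
P(Y_i = 1 | Y_{i-1} = 1) = ((1+p(1-p))(1+2α(α-1)) + (1-p(1-p))(2α(1-α)))/2. -/
theorem stmt_11 {Ω : Type*} [MeasurableSpace Ω] (μ : Measure Ω) [IsProbabilityMeasure μ]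
    (X0 X1 X2 Z0 Z1 W0 W1 Y0 Y1 : Ω → Bool) (p α : ℝ)
    (hp : p ∈ Set.Icc (0:ℝ) 1) (hα : α ∈ Set.Icc (0:ℝ) 1)
    (hjoint : ∀ a b c c0 c1 d0 d1 : Bool,
      (μ {ω | X0 ω = a ∧ X1 ω = b ∧ X2 ω = c ∧ Z0 ω = c0 ∧ Z1 ω = c1
              ∧ W0 ω = d0 ∧ W1 ω = d1}).toReal
        = (1/2) * (1/2) * (1/2) * bern p c0 * bern p c1 * bern α d0 * bern α d1)
    (hY0 : ∀ ω, Y0 ω = Bool.xor (if Z0 ω then X1 ω else X0 ω) (W0 ω))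
    (hY1 : ∀ ω, Y1 ω = Bool.xor (if Z1 ω then X2 ω else X1 ω) (W1 ω)) :
    (μ {ω | Y1 ω = true ∧ Y0 ω = true}).toReal / (μ {ω | Y0 ω = true}).toReal
      = ((1 + p * (1 - p)) * (1 + 2 * α * (α - 1))
          + (1 - p * (1 - p)) * (2 * α * (1 - α))) / 2 :=
  stmt_11_general μ X0 X1 X2 Z0 Z1 W0 W1 Y0 Y1 p α hjoint hY0 hY1
end

section
/- For the write channel with symmetric Markov-1 input with flip probability β, P(Y_i = 0 | Y_{i-1} = 0) = ((1-β) + 2β²p(1-p))((1-α)² + α²) + 2α(1-α)β(p² + (1-p)² + 2(1-β)p(1-p)). -/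
/-!
Both outputs are functions of the seven Boolean variables `(X₀, X₁, X₂, Z₀, Z₁, W₀, W₁)`,
whose joint law is an explicit product of weights. Each probability in the quotient is
therefore a finite sum of these weights. The uniform start and the symmetry of the input chain
give `P(Y₀ = 0) = 1/2`, and the outcomes with `Y₀ = Y₁ = 0` carry half the stated polynomial.
-/

open MeasureTheory

section FiniteFibres

variable {Ω T : Type*} [MeasurableSpace Ω] {μ : Measure Ω} [Fintype T]

lemma measureReal_preimage_le_sum_fiber (F : Ω → T) (P : T → Prop) [DecidablePred P] :
    μ.real {ω | P (F ω)} ≤ ∑ t with P t, μ.real (F ⁻¹' {t}) := by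
  have hunion : {ω | P (F ω)} = ⋃ t ∈ Finset.univ.filter P, F ⁻¹' {t} := by
    ext ω; simp
  rw [hunion]
  exact measureReal_biUnion_finset_le _ _

/-- `F` need not be measurable: additivity over its fibres then comes from subadditivity
alone, once the fibre masses add up to the total mass. -/
lemma measureReal_preimage_eq_sum_fiber (F : Ω → T)
    (htot : ∑ t, μ.real (F ⁻¹' {t}) = μ.real Set.univ) (P : T → Prop) [DecidablePred P] :
    μ.real {ω | P (F ω)} = ∑ t with P t, μ.real (F ⁻¹' {t}) := by
  have hP := measureReal_preimage_le_sum_fiber (μ := μ) F P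
  have hnotP := measureReal_preimage_le_sum_fiber (μ := μ) F (fun t => ¬ P t)
  have hcover : μ.real Set.univ ≤ μ.real {ω | P (F ω)} + μ.real {ω | ¬ P (F ω)} := by
    rw [← Set.union_compl_self {ω | P (F ω)}]
    exact measureReal_union_le _ _
  have hsplit :=
    Finset.sum_filter_add_sum_filter_not Finset.univ P (fun t => μ.real (F ⁻¹' {t}))
  linarith

end FiniteFibres

namespace WriteChannel

-- `(X₀, X₁, X₂, Z₀, Z₁, W₀, W₁)`: two channel uses driven by three consecutive inputs.
abbrev Outcome := Bool × Bool × Bool × Bool × Bool × Bool × Bool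

noncomputable def weight (p α β : ℝ) : Outcome → ℝ
  | (a, b, c, c0, c1, d0, d1) =>
    1/2 * mtrans β a b * mtrans β b c * bern p c0 * bern p c1 * bern α d0 * bern α d1

def out₀ : Outcome → Bool
  | (a, b, _, c0, _, d0, _) => xor (if c0 then b else a) d0

def out₁ : Outcome → Bool
  | (_, b, c, _, c1, _, d1) => xor (if c1 then c else b) d1

lemma sum_weight (p α β : ℝ) : ∑ t, weight p α β t = 1 := by
  simp only [Fintype.sum_prod_type, Fintype.sum_bool]
  simp only [weight, mtrans, bern]
  norm_num
  ring

lemma sum_weight_out₀_eq_false (p α β : ℝ) :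
    ∑ t with out₀ t = false, weight p α β t = 1/2 := by
  simp only [Finset.sum_filter, Fintype.sum_prod_type, Fintype.sum_bool]
  simp only [weight, out₀, mtrans, bern]
  norm_num
  ring

lemma sum_weight_out₁_out₀_eq_false (p α β : ℝ) :
    ∑ t with out₁ t = false ∧ out₀ t = false, weight p α β t
      = 1/2 * (((1 - β) + 2 * β ^ 2 * p * (1 - p)) * ((1 - α) ^ 2 + α ^ 2)
          + 2 * α * (1 - α) * β * (p ^ 2 + (1 - p) ^ 2 + 2 * (1 - β) * p * (1 - p))) := by
  simp only [Finset.sum_filter, Fintype.sum_prod_type, Fintype.sum_bool]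
  simp only [weight, out₀, out₁, mtrans, bern]
  norm_num
  ring

end WriteChannel

open WriteChannel

theorem stmt_12_general {Ω : Type*} [MeasurableSpace Ω] (μ : Measure Ω) [IsProbabilityMeasure μ]
    (X0 X1 X2 Z0 Z1 W0 W1 Y0 Y1 : Ω → Bool) (p α β : ℝ)
    (hjoint : ∀ a b c c0 c1 d0 d1 : Bool,
      (μ {ω | X0 ω = a ∧ X1 ω = b ∧ X2 ω = c ∧ Z0 ω = c0 ∧ Z1 ω = c1
              ∧ W0 ω = d0 ∧ W1 ω = d1}).toReal
        = (1/2) * mtrans β a b * mtrans β b c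
            * bern p c0 * bern p c1 * bern α d0 * bern α d1)
    (hY0 : ∀ ω, Y0 ω = Bool.xor (if Z0 ω then X1 ω else X0 ω) (W0 ω))
    (hY1 : ∀ ω, Y1 ω = Bool.xor (if Z1 ω then X2 ω else X1 ω) (W1 ω)) :
    (μ {ω | Y1 ω = false ∧ Y0 ω = false}).toReal / (μ {ω | Y0 ω = false}).toReal
      = ((1 - β) + 2 * β ^ 2 * p * (1 - p)) * ((1 - α) ^ 2 + α ^ 2)
          + 2 * α * (1 - α) * β * (p ^ 2 + (1 - p) ^ 2 + 2 * (1 - β) * p * (1 - p)) := by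
  set F : Ω → Outcome := fun ω => (X0 ω, X1 ω, X2 ω, Z0 ω, Z1 ω, W0 ω, W1 ω)
  have hfiber : ∀ t, μ.real (F ⁻¹' {t}) = weight p α β t := by
    rintro ⟨a, b, c, c0, c1, d0, d1⟩
    rw [weight, ← hjoint]
    congr 2
    ext ω
    simp [F]
  have htot : ∑ t, μ.real (F ⁻¹' {t}) = μ.real Set.univ := by
    simp only [hfiber, sum_weight, probReal_univ]
  have hden : {ω | Y0 ω = false} = {ω | out₀ (F ω) = false} := by
    ext ω
    simp [hY0, F, out₀]
  have hnum : {ω | Y1 ω = false ∧ Y0 ω = false}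
      = {ω | out₁ (F ω) = false ∧ out₀ (F ω) = false} := by
    ext ω
    simp [hY0, hY1, F, out₀, out₁]
  change μ.real _ / μ.real _ = _
  rw [hnum, hden,
    measureReal_preimage_eq_sum_fiber F htot (fun t => out₁ t = false ∧ out₀ t = false),
    measureReal_preimage_eq_sum_fiber F htot (fun t => out₀ t = false)]
  simp only [hfiber, sum_weight_out₀_eq_false, sum_weight_out₁_out₀_eq_false]
  ring

/-- For the write channel with symmetric Markov-1 input (flip prob β,
uniform start), P(Y_i = 0 | Y_{i-1} = 0)
= ((1-β) + 2β²p(1-p))((1-α)² + α²) + 2α(1-α)β(p² + (1-p)² + 2(1-β)p(1-p)). -/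
theorem stmt_12 {Ω : Type*} [MeasurableSpace Ω] (μ : Measure Ω) [IsProbabilityMeasure μ]
    (X0 X1 X2 Z0 Z1 W0 W1 Y0 Y1 : Ω → Bool) (p α β : ℝ)
    (hp : p ∈ Set.Icc (0:ℝ) 1) (hα : α ∈ Set.Icc (0:ℝ) 1) (hβ : β ∈ Set.Icc (0:ℝ) 1)
    (hjoint : ∀ a b c c0 c1 d0 d1 : Bool,
      (μ {ω | X0 ω = a ∧ X1 ω = b ∧ X2 ω = c ∧ Z0 ω = c0 ∧ Z1 ω = c1
              ∧ W0 ω = d0 ∧ W1 ω = d1}).toReal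
        = (1/2) * mtrans β a b * mtrans β b c
            * bern p c0 * bern p c1 * bern α d0 * bern α d1)
    (hY0 : ∀ ω, Y0 ω = Bool.xor (if Z0 ω then X1 ω else X0 ω) (W0 ω))
    (hY1 : ∀ ω, Y1 ω = Bool.xor (if Z1 ω then X2 ω else X1 ω) (W1 ω)) :
    (μ {ω | Y1 ω = false ∧ Y0 ω = false}).toReal / (μ {ω | Y0 ω = false}).toReal
      = ((1 - β) + 2 * β ^ 2 * p * (1 - p)) * ((1 - α) ^ 2 + α ^ 2)
          + 2 * α * (1 - α) * β * (p ^ 2 + (1 - p) ^ 2 + 2 * (1 - β) * p * (1 - p)) :=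
  stmt_12_general μ X0 X1 X2 Z0 Z1 W0 W1 Y0 Y1 p α β hjoint hY0 hY1
end
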